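/- arXiv:1907.10444 — 2 statements merged into one kernel-verified Lean document; each statement's English description precedes it below -/
import Mathlib

section
/- Let G be a unique-labeled SL HR grammar, A a nonterminal (or the start graph), x a vertex of rhs(A), σ a terminal label, and k an index. If traverse_{k,l}(A,x,σ) = (u,y) and traverse_{k,l'}(A,x,σ) = (u',y') are both defined for indices l ≠ l', then u = u', i.e., both traversals reference the same node of the derivation tree dt(A) (only the returned vertex component differs). -/
/-! Formalization of SL HR grammars (straight-line hyperedge replacement grammars),
their derivation trees, traversal, and tableaux data structures. -/

universe u v

/-- A (hyper)graph over a label alphabet `L`: vertices and edges are natural numbers,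
`att` gives the attachment sequence of an edge, `lab` its label, and `ext` is the
sequence of external vertices. -/
structure HRHypergraph (L : Type u) where
  V : Finset ℕ
  E : Finset ℕ
  att : ℕ → List ℕ
  lab : ℕ → L
  ext : List ℕ

namespace HRHypergraph

variable {L : Type u}

/-- Well-formedness of a hypergraph with respect to a rank function on labels:
nonempty vertex set, attachments are repetition-free sequences of vertices of
length equal to the rank of the label (ranks are `≥ 1`), and the external
vertices form a repetition-free sequence of vertices. -/
def WF (rank : L → ℕ) (g : HRHypergraph L) : Prop :=
  g.V.Nonempty ∧
  (∀ e ∈ g.E, ∀ v ∈ g.att e, v ∈ g.V) ∧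
  (∀ e ∈ g.E, (g.att e).Nodup) ∧
  (∀ e ∈ g.E, (g.att e).length = rank (g.lab e)) ∧
  (∀ a : L, 1 ≤ rank a) ∧
  (∀ v ∈ g.ext, v ∈ g.V) ∧
  g.ext.Nodup

/-- The rank of a hypergraph is its number of external vertices. -/
def rank (g : HRHypergraph L) : ℕ := g.ext.length

/-- The vertex-numbered convention: a hypergraph with `n` vertices and `k` external
vertices has `V = {1,…,n}` and `ext = (n-k+1)⋯n`. -/
def VertexNumbered (g : HRHypergraph L) (n : ℕ) : Prop :=
  g.V = Finset.Icc 1 n ∧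
  g.ext = (List.range g.ext.length).map (fun i => n - g.ext.length + 1 + i)

/-- A hypergraph is unique-labeled if for every vertex `x`, label `a` and position `i`
there is at most one edge labeled `a` whose `i`-th attached vertex is `x`. -/
def UniqueLabeled (g : HRHypergraph L) : Prop :=
  ∀ (x : ℕ) (a : L) (i : ℕ), ∀ e₁ ∈ g.E, ∀ e₂ ∈ g.E,
    g.lab e₁ = a → g.lab e₂ = a →
    (g.att e₁)[i]? = some x → (g.att e₂)[i]? = some x → e₁ = e₂

/-- `x` and `y` are `a`-`k`-`l`-neighbors: some `a`-labeled edge has `x` attached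
at position `k` and `y` attached at position `l` (positions are 0-based). -/
def Neighbors (g : HRHypergraph L) (a : L) (k l : ℕ) (x y : ℕ) : Prop :=
  ∃ e ∈ g.E, g.lab e = a ∧ (g.att e)[k]? = some x ∧ (g.att e)[l]? = some y

/-- An isomorphism of hypergraphs. -/
structure Iso (g h : HRHypergraph L) where
  vmap : ℕ → ℕ
  emap : ℕ → ℕ
  vmap_bij : Set.BijOn vmap ↑g.V ↑h.V
  emap_bij : Set.BijOn emap ↑g.E ↑h.E
  att_map : ∀ e ∈ g.E, h.att (emap e) = (g.att e).map vmap
  lab_map : ∀ e ∈ g.E, h.lab (emap e) = g.lab e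
  ext_map : h.ext = g.ext.map vmap

def Isomorphic (g h : HRHypergraph L) : Prop := Nonempty (Iso g h)

/-- `res` is (an instance of) the replacement of edge `e` of `g` by (a disjoint copy of)
the graph `h`: `e` is deleted, a renamed copy of `h` is added, the `i`-th external
vertex of the copy is identified with the `i`-th attached vertex of `e`, and the
external vertices of the result are those of `g`. -/
def IsReplacement (g : HRHypergraph L) (e : ℕ) (h : HRHypergraph L) (res : HRHypergraph L) : Prop :=
  (g.att e).length = h.ext.length ∧
  ∃ (ρ : ℕ → ℕ) (η : ℕ → ℕ),
    Set.InjOn ρ ↑h.V ∧ Set.InjOn η ↑h.E ∧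
    (∀ (i x : ℕ), h.ext[i]? = some x → (g.att e)[i]? = some (ρ x)) ∧
    (∀ x ∈ h.V, x ∉ h.ext → ρ x ∉ g.V) ∧
    (∀ f ∈ h.E, η f ∉ g.E) ∧
    res.V = g.V ∪ h.V.image ρ ∧
    res.E = g.E.erase e ∪ h.E.image η ∧
    (∀ f ∈ g.E.erase e, res.att f = g.att f ∧ res.lab f = g.lab f) ∧
    (∀ f ∈ h.E, res.att (η f) = (h.att f).map ρ ∧ res.lab (η f) = h.lab f) ∧
    res.ext = g.ext

/-- The canonical vertex renaming used in vertex-numbered replacement: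
the `i`-th external vertex of `h` is renamed to the `i`-th attached vertex of `e`,
every other (internal) vertex `x` of `h` is renamed to `n + x`. -/
def renameVN (g : HRHypergraph L) (e : ℕ) (h : HRHypergraph L) (n : ℕ) (x : ℕ) : ℕ :=
  if x ∈ h.ext then (g.att e).getD (List.idxOf x h.ext) 0 else n + x

/-- A fresh edge identifier for `g`. -/
def freshE (g : HRHypergraph L) : ℕ := g.E.sup id + 1

/-- Vertex-numbered replacement `g[e/h]`, where `n` is the number of vertices of `g`:
internal vertices of the copy of `h` are renumbered consecutively from `n+1`. -/
def replaceVN (g : HRHypergraph L) (e : ℕ) (h : HRHypergraph L) (n : ℕ) : HRHypergraph L where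
  V := g.V ∪ (h.V.filter (fun x => x ∉ h.ext)).image (fun x => n + x)
  E := g.E.erase e ∪ h.E.image (fun f => freshE g + f)
  att := fun f => if f ∈ g.E.erase e then g.att f
    else (h.att (f - freshE g)).map (renameVN g e h n)
  lab := fun f => if f ∈ g.E.erase e then g.lab f else h.lab (f - freshE g)
  ext := g.ext

end HRHypergraph

/-- A hyperedge replacement grammar over terminal alphabet `σ` and nonterminal
alphabet `ν`: each symbol has a rank, each nonterminal `A` has exactly one rule
`A → rhs A`, and there is a start hypergraph. -/
structure HRG (σ : Type u) (ν : Type v) where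
  rankT : σ → ℕ
  rankN : ν → ℕ
  rhs : ν → HRHypergraph (σ ⊕ ν)
  start : HRHypergraph (σ ⊕ ν)

namespace HRG

variable {σ : Type u} {ν : Type v}

/-- The rank function on the combined label alphabet. -/
def rankL (G : HRG σ ν) : σ ⊕ ν → ℕ := Sum.elim G.rankT G.rankN

/-- The graph associated with a derivation-tree root: the start graph for `none`,
the right-hand side of `A` for `some A`. -/
def graphOf (G : HRG σ ν) : Option ν → HRHypergraph (σ ⊕ ν)
  | none => G.start
  | some A => G.rhs A

/-- The rank of a derivation-tree root (the start graph has rank 0). -/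
def rankO (G : HRG σ ν) : Option ν → ℕ
  | none => 0
  | some A => G.rankN A

/-- Well-formedness of an HR grammar. -/
def WF (G : HRG σ ν) : Prop :=
  (∀ a : σ, 1 ≤ G.rankT a) ∧ (∀ A : ν, 1 ≤ G.rankN A) ∧
  (∀ A : ν, (G.rhs A).WF G.rankL) ∧
  (∀ A : ν, (G.rhs A).ext.length = G.rankN A) ∧
  G.start.WF G.rankL ∧ G.start.ext = []

/-- `A₁ ≤_NT A₂`: some edge of `rhs A₁` is labeled by the nonterminal `A₂`. -/
def ntStep (G : HRG σ ν) (A B : ν) : Prop :=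
  ∃ e ∈ (G.rhs A).E, (G.rhs A).lab e = Sum.inr B

/-- Some edge of the start graph is labeled by the nonterminal `B`. -/
def startStep (G : HRG σ ν) (B : ν) : Prop :=
  ∃ e ∈ G.start.E, G.start.lab e = Sum.inr B

/-- Straight-line restriction: the nonterminal dependency relation is acyclic
(it admits a strictly decreasing rank into `ℕ`), and every nonterminal is
reachable from the start graph (the DAG is rooted at `S`). -/
def SL (G : HRG σ ν) : Prop :=
  (∃ d : ν → ℕ, ∀ A B : ν, G.ntStep A B → d B < d A) ∧
  (∀ B : ν, ∃ A : ν, G.startStep A ∧ Relation.ReflTransGen G.ntStep A B)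

/-- One derivation step: replace some nonterminal edge by the right-hand side of
its rule. -/
def Derives (G : HRG σ ν) (g g' : HRHypergraph (σ ⊕ ν)) : Prop :=
  ∃ e ∈ g.E, ∃ B : ν, g.lab e = Sum.inr B ∧ HRHypergraph.IsReplacement g e (G.rhs B) g'

/-- A graph all of whose edges are labeled by terminals. -/
def TerminalGraph (g : HRHypergraph (σ ⊕ ν)) : Prop :=
  ∀ e ∈ g.E, ∃ a : σ, g.lab e = Sum.inl a

/-- The language of `G`: all terminal-labeled graphs derivable from the start graph. -/
def Lang (G : HRG σ ν) : Set (HRHypergraph (σ ⊕ ν)) :=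
  {g | Relation.ReflTransGen G.Derives G.start g ∧ TerminalGraph g}

/-- Lexicographic comparison of attachment sequences. -/
def listLexLE : List ℕ → List ℕ → Bool
  | [], _ => true
  | _ :: _, [] => false
  | a :: as, b :: bs => if a < b then true else if b < a then false else listLexLE as bs

/-- The derivation order `≤_dt` on edges: lexicographic on attachment sequences,
ties broken by the fixed linear order on nonterminals. -/
def dtLE [LinearOrder ν] (g : HRHypergraph (σ ⊕ ν)) (e f : ℕ) : Bool :=
  if g.att e = g.att f then
    match g.lab e, g.lab f with
    | Sum.inr B, Sum.inr C => decide (B ≤ C)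
    | _, _ => true
  else listLexLE (g.att e) (g.att f)

/-- The nonterminal edges of `g`, listed in the derivation order `≤_dt`. -/
def ntEdgeList [LinearOrder ν] (g : HRHypergraph (σ ⊕ ν)) : List ℕ :=
  ((g.E.filter (fun e => (g.lab e).isRight = true)).sort (· ≤ ·)).mergeSort (dtLE g)

/-- Replace all nonterminal edges of `g`, in derivation order, by `val` of their
labels, using vertex-numbered replacement. -/
def expandVal (G : HRG σ ν) [LinearOrder ν] (val : ν → HRHypergraph (σ ⊕ ν))
    (g : HRHypergraph (σ ⊕ ν)) : HRHypergraph (σ ⊕ ν) :=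
  (ntEdgeList g).foldl (fun acc e =>
    match acc.lab e with
    | Sum.inr B => HRHypergraph.replaceVN acc e (val B) acc.V.card
    | Sum.inl _ => acc) g

/-- `val` is the family `(val A)_{A ∈ N}` defined by the straight-line grammar:
`val A` is obtained from `rhs A` by replacing all its nonterminal edges, in
derivation order, by the values of their labels. -/
def ValFamily (G : HRG σ ν) [LinearOrder ν] (val : ν → HRHypergraph (σ ⊕ ν)) : Prop :=
  ∀ A : ν, val A = G.expandVal val (G.rhs A)

/-- The number of internal vertices of `val A`. -/
def iNodes (val : ν → HRHypergraph (σ ⊕ ν)) (A : ν) : ℕ :=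
  ((val A).V \ (val A).ext.toFinset).card

/-- The sequence of nonterminals labeling the derivation-tree nodes along the
Dewey address `u` (children are numbered from 0 in derivation order), starting
from a root labeled by the graph `g`. `none` if the address is invalid. -/
def ntSeq (G : HRG σ ν) [LinearOrder ν] : HRHypergraph (σ ⊕ ν) → List ℕ → Option (List ν)
  | _, [] => some []
  | g, i :: u =>
    match (ntEdgeList g)[i]? with
    | some e =>
      match g.lab e with
      | Sum.inr B => (ntSeq G (G.rhs B) u).map (fun Bs => B :: Bs)
      | Sum.inl _ => none
    | none => none

/-- The graph `g_u` labeling the derivation-tree node at Dewey address `u`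
(starting from a root labeled by `g`), if the address is valid. -/
def graphAt (G : HRG σ ν) [LinearOrder ν] : HRHypergraph (σ ⊕ ν) → List ℕ → Option (HRHypergraph (σ ⊕ ν))
  | g, [] => some g
  | g, i :: u =>
    match (ntEdgeList g)[i]? with
    | some e =>
      match g.lab e with
      | Sum.inr B => graphAt G (G.rhs B) u
      | Sum.inl _ => none
    | none => none

/-- The nonterminal (or start, `none`) labeling the derivation-tree node at address
`u` in the derivation tree rooted at `root`. -/
def ntAtNode (G : HRG σ ν) [LinearOrder ν] (root : Option ν) (u : List ℕ) :
    Option (Option ν) :=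
  (ntSeq G (G.graphOf root) u).map (fun Bs => (Bs.map some).getLastD root)

/-- `iN`-value of the label of edge `e` (0 for terminal labels). -/
def iNOf (iN : ν → ℕ) (g : HRHypergraph (σ ⊕ ν)) (e : ℕ) : ℕ :=
  match g.lab e with
  | Sum.inr B => iN B
  | Sum.inl _ => 0

/-- `first(u)` relative to the derivation tree rooted at `g`, where `iN B` is the
number of internal vertices of `val B`:
`first(ε) = 0` and `first(v.i) = first(v) + |V_{g_v}| - |ext_{g_v}| + Σ_{j<i} iN(lab e_j)`. -/
def firstAux (G : HRG σ ν) [LinearOrder ν] (iN : ν → ℕ) :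
    HRHypergraph (σ ⊕ ν) → List ℕ → ℕ
  | _, [] => 0
  | g, i :: u =>
    (g.V.card - g.ext.length + (((ntEdgeList g).take i).map (iNOf iN g)).sum) +
      (match (ntEdgeList g)[i]? with
       | some e =>
         (match g.lab e with
          | Sum.inr B => firstAux G iN (G.rhs B) u
          | Sum.inl _ => 0)
       | none => 0)

/-- `TraverseRel G a k l g x u y` formalizes `traverse_{k,l}(A,x,a) = (u,y)` for the
rule with right-hand side `g`: either `g` itself contains an `a`-labeled edge with
`x` at position `k` and `y` at position `l` (then `u = ε`), or `x` is the `j`-th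
attached vertex of the `i`-th nonterminal edge `e` of `g` and the traversal
continues from the `j`-th external vertex of `rhs (lab e)`. -/
inductive TraverseRel (G : HRG σ ν) [LinearOrder ν] (a : σ) (k l : ℕ) :
    HRHypergraph (σ ⊕ ν) → ℕ → List ℕ → ℕ → Prop
  | base {g : HRHypergraph (σ ⊕ ν)} {x y e : ℕ}
      (he : e ∈ g.E) (hlab : g.lab e = Sum.inl a)
      (hk : (g.att e)[k]? = some x) (hl : (g.att e)[l]? = some y) :
      TraverseRel G a k l g x [] y
  | step {g : HRHypergraph (σ ⊕ ν)} {x i e : ℕ} {B : ν} {j z : ℕ} {v : List ℕ} {y : ℕ}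
      (hi : (ntEdgeList g)[i]? = some e) (hB : g.lab e = Sum.inr B)
      (hx : (g.att e)[j]? = some x) (hz : (G.rhs B).ext[j]? = some z)
      (hrec : TraverseRel G a k l (G.rhs B) z v y) :
      TraverseRel G a k l g x (i :: v) y

/-- `InternalRel G g0 u x v y` formalizes `internal(u,x) = (v,y)` in the derivation
tree rooted at `g0`: the vertex `x` of `g_u` is identified, through the chain of
external-vertex identifications of the derivation, with the internal vertex `y`
of `g_v` at the ancestor `v` of `u`. -/
inductive InternalRel (G : HRG σ ν) [LinearOrder ν] (g0 : HRHypergraph (σ ⊕ ν)) :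
    List ℕ → ℕ → List ℕ → ℕ → Prop
  | refl {u : List ℕ} {x : ℕ} {g : HRHypergraph (σ ⊕ ν)}
      (hg : graphAt G g0 u = some g) (hx : x ∈ g.V) (hint : x ∉ g.ext) :
      InternalRel G g0 u x u x
  | up {u : List ℕ} {i x j : ℕ} {g gc : HRHypergraph (σ ⊕ ν)} {e y : ℕ} {v : List ℕ} {z : ℕ}
      (hg : graphAt G g0 u = some g)
      (he : (ntEdgeList g)[i]? = some e)
      (hgc : graphAt G g0 (u ++ [i]) = some gc)
      (hx : gc.ext[j]? = some x) (hy : (g.att e)[j]? = some y)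
      (hrec : InternalRel G g0 u y v z) :
      InternalRel G g0 (u ++ [i]) x v z

end HRG

/-- A tableau: a matrix of cells (each holding a pointer `nxt` and a vertex number
`vtx`), together with the column vectors `nt` and `first` and an offset.
Rows and columns are 0-based; `nt i = none` denotes the start graph. -/
structure Tableau (ν : Type v) where
  rows : ℕ
  cols : ℕ
  nxt : ℕ → ℕ → Option (ℕ × ℕ)
  vtx : ℕ → ℕ → ℕ
  nt : ℕ → Option ν
  first : ℕ → ℕ
  off : ℕ

namespace Tableau

variable {ν : Type v}

/-- Following the `nxt` pointer of cell `(i,j)`, and one more pointer if the first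
one is downwards (targets a row strictly below `i`). -/
def findVertex (t : Tableau ν) (i j : ℕ) : Option (ℕ × ℕ) :=
  match t.nxt i j with
  | none => none
  | some (i', j') => if i' ≤ i then some (i', j') else t.nxt i' j'

/-- The cell of `t` redirected by `concat` for column `j`: the target of the
downwards pointer of the first-row cell `(0,j)`, if that pointer is downwards,
and `(0,j)` itself otherwise. -/
def downTarget (t : Tableau ν) (j : ℕ) : ℕ × ℕ :=
  match t.nxt 0 j with
  | some (i', j') => if 0 < i' then (i', j') else (0, j)
  | none => (0, j)

end Tableau

namespace HRG

variable {σ : Type u} {ν : Type v}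

/-- The first `m` rows of the tableau `t` model the path from the root (labeled by
`graphOf root`) to the node `u` (with `m = |u| + 1`) of the derivation tree:
rows carry the correct nonterminals and (offset-adjusted) `first` values, and for
every external vertex of every row graph, `findVertex` reaches, in at most two
pointer steps, the cell holding the internal vertex it is identified with
(a first-row cell with `vtx = 0` if no such vertex exists), and a pointer is
upwards iff no lower row shares its `findVertex` value. -/
def ModelsUpTo (G : HRG σ ν) [LinearOrder ν] (iN : ν → ℕ) (root : Option ν)
    (u : List ℕ) (t : Tableau ν) (m : ℕ) : Prop :=
  ∃ Bs : List ν, ntSeq G (G.graphOf root) u = some Bs ∧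
    m = u.length + 1 ∧ m ≤ t.rows ∧
    (∀ i < m, t.nt i = (root :: Bs.map some).getD i root) ∧
    (∀ i < m, t.first i + t.off = firstAux G iN (G.graphOf root) (u.take i)) ∧
    (∀ i < m, ∀ gi, graphAt G (G.graphOf root) (u.take i) = some gi →
      ∀ j y, gi.ext[j]? = some y →
        (∀ v z, InternalRel G (G.graphOf root) (u.take i) y v z →
          ∃ j', t.findVertex i j = some (v.length, j') ∧ t.vtx v.length j' = z) ∧
        ((¬ ∃ v z, InternalRel G (G.graphOf root) (u.take i) y v z) →
          ∃ j', t.findVertex i j = some (0, j') ∧ t.vtx 0 j' = 0) ∧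
        ((∀ p ∈ t.nxt i j, p.1 ≤ i) ↔
          ¬ ∃ i' j', i < i' ∧ i' < m ∧ j' < t.cols ∧
            t.findVertex i' j' = t.findVertex i j))

/-- The tableau `t` models the path from the root to the node `u` of the derivation
tree rooted at `graphOf root` (Definition of `tab(u)`): in addition to
`ModelsUpTo` for all rows, it has exactly `|u| + 1` rows, offset `0`, and all
out-of-range entries are `0`. -/
def Models (G : HRG σ ν) [LinearOrder ν] (iN : ν → ℕ) (root : Option ν)
    (u : List ℕ) (t : Tableau ν) : Prop :=
  ModelsUpTo G iN root u t (u.length + 1) ∧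
  t.rows = u.length + 1 ∧ t.off = 0 ∧
  (∀ i j : ℕ, t.rows ≤ i ∨ t.cols ≤ j → t.nxt i j = none ∧ t.vtx i j = 0)

/-- The one-row tableau `t_ε` for the root of the derivation tree of `root`:
every column `j < rank root` holds a self-loop (upwards) pointer, all other
entries are `0`. -/
def initTab (G : HRG σ ν) (root : Option ν) (κ : ℕ) : Tableau ν where
  rows := 1
  cols := κ
  nxt := fun a b => if a = 0 ∧ b < G.rankO root then some (0, b) else none
  vtx := fun _ _ => 0
  nt := fun _ => root
  first := fun _ => 0
  off := 0

/-- One step of Algorithm `createTableau`: extend the tableau `t`, which models a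
path ending in a node labeled by nonterminal `B = nt (rows - 1)`, by a new bottom
row for the `l`-th child (the `l`-th nonterminal edge `e_l` of `rhs B`): for each
`j < rank e_l`, with `x = att(e_l)[j]`, if `x` is internal then the new cell points
to the cell above which receives `vtx = x`; if `x` is the `j'`-th external vertex
of `rhs B` then the new cell takes over the pointer of cell `(rows-1, j')`, which
in turn points down to the new cell, and all pointers from higher rows targeting
`(rows-1, j')` are redirected to the new cell. -/
def extendTab (G : HRG σ ν) [LinearOrder ν] (iN : ν → ℕ) (t : Tableau ν) (l : ℕ) :
    Tableau ν :=
  let m := t.rows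
  let g := G.graphOf (t.nt (m - 1))
  let es := ntEdgeList g
  let e := es.getD l 0
  let al := g.att e
  let isExtCol : ℕ → Bool := fun c =>
    match g.ext[c]? with
    | some x => decide (x ∈ al)
    | none => false
  let newColOf : ℕ → ℕ := fun c =>
    match g.ext[c]? with
    | some x => List.idxOf x al
    | none => 0
  { rows := m + 1
    cols := t.cols
    nt := fun i => if i = m then
        (match g.lab e with
         | Sum.inr B => some B
         | Sum.inl _ => none)
      else t.nt i
    first := fun i => if i = m then
        t.first (m - 1) + g.V.card - g.ext.length + ((es.take l).map (iNOf iN g)).sum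
      else t.first i
    off := t.off
    vtx := fun i j =>
      if i = m then 0
      else if i = m - 1 ∧ j < al.length ∧ al.getD j 0 ∉ g.ext then al.getD j 0
      else t.vtx i j
    nxt := fun i j =>
      if i = m then
        (if j < al.length then
          (if al.getD j 0 ∈ g.ext then t.nxt (m - 1) (List.idxOf (al.getD j 0) g.ext)
           else some (m - 1, j))
         else none)
      else if i = m - 1 then
        (if isExtCol j then some (m, newColOf j) else t.nxt i j)
      else
        (match t.nxt i j with
         | some (i', c) => if i' = m - 1 ∧ isExtCol c then some (m, newColOf c) else some (i', c)
         | none => none) }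

/-- Algorithm `createTableau`: the tableau for the node at address `u` of the
derivation tree rooted at `graphOf root`, built by starting from `initTab` and
extending one row per step along the path. -/
def createTableau (G : HRG σ ν) [LinearOrder ν] (iN : ν → ℕ) (κ : ℕ)
    (root : Option ν) (u : List ℕ) : Tableau ν :=
  u.foldl (extendTab G iN) (initTab G root κ)

open Classical in
/-- Algorithm `concat` (as the resulting virtual tableau): concatenate `t₂`
(modeling a path in the derivation tree of the nonterminal at row `r` of `t₁`)
to row `r` of `t₁`; `kB` is the rank of that nonterminal. Rows `< r` are those
of `t₁`; rows `≥ r` come from `t₂`, with, for each column `j < kB`, the relevant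
upwards pointer of `t₂` redirected to `findVertex(t₁(r,j))`, and with the
offset of `t₂` set to `t₁.off + t₁.first r`. -/
noncomputable def concatTab (t₂ t₁ : Tableau ν) (r kB : ℕ) : Tableau ν where
  rows := r + t₂.rows
  cols := t₁.cols
  nt := fun i => if i < r then t₁.nt i else t₂.nt (i - r)
  first := fun i => if i < r then t₁.first i + t₁.off
    else t₂.first (i - r) + (t₁.off + t₁.first r)
  off := 0
  vtx := fun i j => if i < r then t₁.vtx i j else t₂.vtx (i - r) j
  nxt := fun i j =>
    if i < r then t₁.nxt i j
    else if h : ∃ j0, j0 < kB ∧ Tableau.downTarget t₂ j0 = (i - r, j) then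
      t₁.findVertex r h.choose
    else (t₂.nxt (i - r) j).map (fun p => (p.1 + r, p.2))

end HRG

/-- The string graph with `N` consecutive `a`-labeled edges: vertices `1,…,N+1`,
the `i`-th edge attached to `(i, i+1)`. -/
def pathGraph {L : Type u} (N : ℕ) (a : L) : HRHypergraph L where
  V := Finset.Icc 1 (N + 1)
  E := Finset.Icc 1 N
  att := fun e => [e, e + 1]
  lab := fun _ => a
  ext := []

/-- The star grammar `G_n` of Figure `starGrammar1`: terminal alphabet `{a}` of rank 2,
nonterminals `A_0, …, A_{n-1}` of rank 2; the start graph has vertices `{1,2,3}` and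
two `A_0`-edges attached to `(1,2)` and `(1,3)`; `rhs A_i` has vertices `{1,2,3}`,
external vertices `(2,3)`, and two edges labeled `A_{i+1}` (labeled `a` for `i = n-1`)
attached to `(2,3)` and `(2,1)`. -/
def starG (n : ℕ) : HRG Unit (Fin n) where
  rankT := fun _ => 2
  rankN := fun _ => 2
  rhs := fun i =>
    { V := {1, 2, 3}
      E := {1, 2}
      att := fun e => if e = 1 then [2, 3] else [2, 1]
      lab := fun _ => if h : i.val + 1 < n then Sum.inr ⟨i.val + 1, h⟩ else Sum.inl ()
      ext := [2, 3] }
  start :=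
    { V := {1, 2, 3}
      E := {1, 2}
      att := fun e => if e = 1 then [1, 2] else [1, 3]
      lab := fun _ => if h : 0 < n then Sum.inr ⟨0, h⟩ else Sum.inl ()
      ext := [] }

/-!
Both traversals start at `x` with the same label `a` and position `k`; they differ only in the
position `l` they read off at the end. Follow either one down the derivation tree to the
terminal edge where it stops: that edge has a copy in the expansion `expandVal val g`, labeled
`a` and with `x` at position `k`. Unique labeling of the expansion (which descends from the start
graph to every `val A`) makes the two copies the same edge. The Dewey address can be read off the
copy, because the edges created when the `i`-th nonterminal edge is replaced have identifiers
at least `freshE` of the graph before step `i` and below `freshE` of every later graph.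
-/

namespace List

variable {α : Type*} {l : List α} {i : ℕ} {a : α}

lemma lt_length_of_getElem? (h : l[i]? = some a) : i < l.length :=
  (getElem?_eq_some_iff.mp h).1

lemma mem_drop_of_getElem? (h : l[i]? = some a) : a ∈ l.drop i := by
  obtain ⟨hi, rfl⟩ := getElem?_eq_some_iff.mp h
  exact mem_drop_iff_getElem.mpr ⟨0, by omega, by simp⟩

end List

namespace HRHypergraph

variable {L : Type u}

lemma lt_freshE {g : HRHypergraph L} {f : ℕ} (hf : f ∈ g.E) : f < freshE g :=
  Nat.lt_succ_of_le (Finset.le_sup (f := id) hf)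

structure KeepsEdge (g g' : HRHypergraph L) (f : ℕ) : Prop where
  mem : f ∈ g'.E
  att : g'.att f = g.att f
  lab : g'.lab f = g.lab f

lemma KeepsEdge.refl {g : HRHypergraph L} {f : ℕ} (hf : f ∈ g.E) : KeepsEdge g g f :=
  ⟨hf, rfl, rfl⟩

lemma KeepsEdge.trans {g g' g'' : HRHypergraph L} {f : ℕ} (h : KeepsEdge g g' f)
    (h' : KeepsEdge g' g'' f) : KeepsEdge g g'' f :=
  ⟨h'.mem, h'.att.trans h.att, h'.lab.trans h.lab⟩

variable {g h : HRHypergraph L} {e n f : ℕ}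

lemma keepsEdge_replaceVN (hf : f ∈ g.E.erase e) : KeepsEdge g (replaceVN g e h n) f :=
  ⟨Finset.mem_union_left _ hf, if_pos hf, if_pos hf⟩

lemma replaceVN_fresh (hf : f ∈ h.E) :
    freshE g + f ∈ (replaceVN g e h n).E ∧
      (replaceVN g e h n).att (freshE g + f) = (h.att f).map (renameVN g e h n) ∧
      (replaceVN g e h n).lab (freshE g + f) = h.lab f := by
  have hnot : freshE g + f ∉ g.E.erase e := fun hm => by
    have := lt_freshE (Finset.mem_of_mem_erase hm)
    omega
  refine ⟨Finset.mem_union_right _ (Finset.mem_image_of_mem _ hf), ?_, ?_⟩ <;>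
    simp only [replaceVN, if_neg hnot, Nat.add_sub_cancel_left]

lemma renameVN_eq_of_getElem? (hnd : h.ext.Nodup) {j z x : ℕ} (hz : h.ext[j]? = some z)
    (hx : (g.att e)[j]? = some x) : renameVN g e h n z = x := by
  obtain ⟨hj, rfl⟩ := List.getElem?_eq_some_iff.mp hz
  rw [renameVN, if_pos (List.getElem_mem hj), hnd.idxOf_getElem, List.getD_eq_getElem?_getD, hx]
  rfl

end HRHypergraph

namespace HRG

open HRHypergraph

variable {σ : Type u} {ν : Type v}

lemma WF.rhs_ext_nodup {G : HRG σ ν} (hWF : G.WF) (B : ν) : (G.rhs B).ext.Nodup :=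
  (hWF.2.2.1 B).2.2.2.2.2.2

section Expansion

def expandStep (val : ν → HRHypergraph (σ ⊕ ν)) (acc : HRHypergraph (σ ⊕ ν)) (e : ℕ) :
    HRHypergraph (σ ⊕ ν) :=
  match acc.lab e with
  | Sum.inr B => replaceVN acc e (val B) acc.V.card
  | Sum.inl _ => acc

variable {val : ν → HRHypergraph (σ ⊕ ν)}

lemma expandStep_of_inr {acc : HRHypergraph (σ ⊕ ν)} {e : ℕ} {B : ν}
    (h : acc.lab e = Sum.inr B) : expandStep val acc e = replaceVN acc e (val B) acc.V.card := by
  rw [expandStep, h]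

lemma expandStep_ext (acc : HRHypergraph (σ ⊕ ν)) (e : ℕ) :
    (expandStep val acc e).ext = acc.ext := by
  unfold expandStep
  split <;> rfl

lemma keepsEdge_expandStep {acc : HRHypergraph (σ ⊕ ν)} {e f : ℕ} (hf : f ∈ acc.E)
    (h : (acc.lab f).isLeft ∨ f ≠ e) : KeepsEdge acc (expandStep val acc e) f := by
  cases he : acc.lab e with
  | inl => simpa only [expandStep, he] using KeepsEdge.refl hf
  | inr B =>
    rw [expandStep_of_inr he]
    refine keepsEdge_replaceVN (Finset.mem_erase.mpr ⟨?_, hf⟩)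
    rintro rfl
    simp [he] at h

lemma keepsEdge_foldl_expandStep (es : List ℕ) {acc : HRHypergraph (σ ⊕ ν)} {f : ℕ}
    (hf : f ∈ acc.E) (h : (acc.lab f).isLeft ∨ f ∉ es) :
    KeepsEdge acc (es.foldl (expandStep val) acc) f := by
  induction es generalizing acc with
  | nil => exact KeepsEdge.refl hf
  | cons e es ih =>
    have h₁ : KeepsEdge acc (expandStep val acc e) f :=
      keepsEdge_expandStep hf (h.imp_right fun h he => h (he ▸ List.mem_cons_self))
    exact h₁.trans <| ih h₁.mem <|
      h.imp (fun h => h₁.lab ▸ h) fun h hm => h (List.mem_cons_of_mem _ hm)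

lemma foldl_expandStep_ext (es : List ℕ) (acc : HRHypergraph (σ ⊕ ν)) :
    (es.foldl (expandStep val) acc).ext = acc.ext := by
  induction es generalizing acc with
  | nil => rfl
  | cons e es ih => rw [List.foldl_cons, ih, expandStep_ext]

variable [LinearOrder ν]

lemma ntEdgeList_nodup (g : HRHypergraph (σ ⊕ ν)) : (ntEdgeList g).Nodup :=
  (List.mergeSort_perm _ _).nodup_iff.mpr (Finset.sort_nodup _ _)

lemma mem_ntEdgeList {g : HRHypergraph (σ ⊕ ν)} {e : ℕ} :
    e ∈ ntEdgeList g ↔ e ∈ g.E ∧ (g.lab e).isRight := by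
  rw [ntEdgeList, (List.mergeSort_perm _ _).mem_iff, Finset.mem_sort, Finset.mem_filter]

def expandUpTo (val : ν → HRHypergraph (σ ⊕ ν)) (g : HRHypergraph (σ ⊕ ν)) (i : ℕ) :
    HRHypergraph (σ ⊕ ν) :=
  ((ntEdgeList g).take i).foldl (expandStep val) g

lemma expandVal_eq_expandUpTo (G : HRG σ ν) (g : HRHypergraph (σ ⊕ ν)) :
    G.expandVal val g = expandUpTo val g (ntEdgeList g).length := by
  rw [expandUpTo, List.take_length]
  rfl

lemma expandVal_ext (G : HRG σ ν) (g : HRHypergraph (σ ⊕ ν)) :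
    (G.expandVal val g).ext = g.ext :=
  foldl_expandStep_ext _ g

variable {g : HRHypergraph (σ ⊕ ν)} {i e : ℕ}

lemma keepsEdge_expandUpTo {f : ℕ} (hf : f ∈ g.E)
    (h : (g.lab f).isLeft ∨ f ∉ (ntEdgeList g).take i) : KeepsEdge g (expandUpTo val g i) f :=
  keepsEdge_foldl_expandStep _ hf h

lemma keepsEdge_expandUpTo_of_mem_drop {f : ℕ} (hf : f ∈ (ntEdgeList g).drop i) :
    KeepsEdge g (expandUpTo val g i) f :=
  keepsEdge_expandUpTo (mem_ntEdgeList.mp (List.mem_of_mem_drop hf)).1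
    (Or.inr fun h => List.disjoint_take_drop (ntEdgeList_nodup g) le_rfl h hf)

/-- Edges created by the `i`-th replacement are never replaced later: every edge still to be
replaced is an edge of `g` that has survived the first `i` steps, so it lies below
`freshE (expandUpTo val g i)`. -/
lemma keepsEdge_expandUpTo_of_freshE_le (hi : (ntEdgeList g)[i]? = some e) {i' f : ℕ}
    (hlt : i < i') (hf : f ∈ (expandStep val (expandUpTo val g i) e).E)
    (hle : freshE (expandUpTo val g i) ≤ f) :
    KeepsEdge (expandStep val (expandUpTo val g i) e) (expandUpTo val g i') f := by
  have hsplit : expandUpTo val g i' = (((ntEdgeList g).take i').drop (i + 1)).foldl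
      (expandStep val) (expandStep val (expandUpTo val g i) e) := by
    conv_lhs => rw [expandUpTo, ← List.take_append_drop (i + 1) ((ntEdgeList g).take i')]
    rw [List.take_take, min_eq_left hlt, List.take_add_one, hi, List.foldl_append,
      List.foldl_append]
    rfl
  rw [hsplit]
  refine keepsEdge_foldl_expandStep _ hf (Or.inr fun hm => ?_)
  have hdrop : f ∈ (ntEdgeList g).drop i := List.drop_subset_drop_left _ (Nat.le_succ i)
    (((List.take_sublist _ _).drop (i + 1)).subset hm)
  exact absurd (lt_freshE (keepsEdge_expandUpTo_of_mem_drop (val := val) hdrop).mem)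
    (not_lt.mpr hle)

lemma expandUpTo_fresh (hi : (ntEdgeList g)[i]? = some e) {B : ν} (hB : g.lab e = Sum.inr B)
    {f : ℕ} (hf : f ∈ (val B).E) {i' : ℕ} (hlt : i < i') :
    freshE (expandUpTo val g i) + f ∈ (expandUpTo val g i').E ∧
      (expandUpTo val g i').att (freshE (expandUpTo val g i) + f) =
        ((val B).att f).map
          (renameVN (expandUpTo val g i) e (val B) (expandUpTo val g i).V.card) ∧
      (expandUpTo val g i').lab (freshE (expandUpTo val g i) + f) = (val B).lab f := by
  have he : KeepsEdge g (expandUpTo val g i) e :=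
    keepsEdge_expandUpTo_of_mem_drop (List.mem_drop_of_getElem? hi)
  obtain ⟨hmem, hatt, hlab⟩ := replaceVN_fresh (g := expandUpTo val g i) (e := e)
    (n := (expandUpTo val g i).V.card) hf
  rw [← expandStep_of_inr (he.lab.trans hB)] at hmem hatt hlab
  have hk := keepsEdge_expandUpTo_of_freshE_le hi hlt hmem (Nat.le_add_right _ _)
  exact ⟨hk.mem, hk.att.trans hatt, hk.lab.trans hlab⟩

end Expansion

section UniqueLabeled

variable [LinearOrder ν] {val : ν → HRHypergraph (σ ⊕ ν)}

lemma uniqueLabeled_val_of_mem (G : HRG σ ν) {g : HRHypergraph (σ ⊕ ν)}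
    (hUL : (G.expandVal val g).UniqueLabeled) {e : ℕ} {A : ν} (he : e ∈ g.E)
    (hA : g.lab e = Sum.inr A) : (val A).UniqueLabeled := by
  obtain ⟨i, hi⟩ : ∃ i, (ntEdgeList g)[i]? = some e :=
    List.mem_iff_getElem?.mp (mem_ntEdgeList.mpr ⟨he, by rw [hA]; rfl⟩)
  intro x b p f₁ hf₁ f₂ hf₂ hl₁ hl₂ ha₁ ha₂
  rw [expandVal_eq_expandUpTo] at hUL
  obtain ⟨m₁, a₁, l₁⟩ := expandUpTo_fresh hi hA hf₁ (List.lt_length_of_getElem? hi)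
  obtain ⟨m₂, a₂, l₂⟩ := expandUpTo_fresh hi hA hf₂ (List.lt_length_of_getElem? hi)
  have := hUL _ b p _ m₁ _ m₂ (l₁.trans hl₁) (l₂.trans hl₂)
    (by rw [a₁, List.getElem?_map, ha₁]; rfl) (by rw [a₂, List.getElem?_map, ha₂]; rfl)
  omega

lemma uniqueLabeled_val_of_reflTransGen (G : HRG σ ν) (hval : G.ValFamily val)
    (hUL : (G.expandVal val G.start).UniqueLabeled) {A₀ A : ν} (h₀ : G.startStep A₀)
    (hreach : Relation.ReflTransGen G.ntStep A₀ A) : (val A).UniqueLabeled := by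
  induction hreach with
  | refl =>
    obtain ⟨e, he, hlab⟩ := h₀
    exact uniqueLabeled_val_of_mem G hUL he hlab
  | tail _ hstep ih =>
    obtain ⟨e, he, hlab⟩ := hstep
    exact uniqueLabeled_val_of_mem G (hval _ ▸ ih) he hlab

end UniqueLabeled

section TraversalEdge

variable [LinearOrder ν] (G : HRG σ ν) (val : ν → HRHypergraph (σ ⊕ ν)) (a : σ) (k : ℕ)

/-- `TraversalEdge G val a k g u x f`: the traversal from `x` along the address `u` ends at an
`a`-labeled edge with `x` at position `k`, whose copy in `G.expandVal val g` is `f`. -/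
inductive TraversalEdge : HRHypergraph (σ ⊕ ν) → List ℕ → ℕ → ℕ → Prop
  | base {g : HRHypergraph (σ ⊕ ν)} {x f : ℕ}
      (hf : f ∈ g.E) (hlab : g.lab f = Sum.inl a) (hk : (g.att f)[k]? = some x) :
      TraversalEdge g [] x f
  | step {g : HRHypergraph (σ ⊕ ν)} {x i e : ℕ} {B : ν} {j z : ℕ} {v : List ℕ} {f : ℕ}
      (hi : (ntEdgeList g)[i]? = some e) (hB : g.lab e = Sum.inr B)
      (hx : (g.att e)[j]? = some x) (hz : (G.rhs B).ext[j]? = some z)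
      (hrec : TraversalEdge (G.rhs B) v z f) :
      TraversalEdge g (i :: v) x (freshE (expandUpTo val g i) + f)

variable {G val a k}

lemma TraverseRel.exists_traversalEdge {l : ℕ} {g : HRHypergraph (σ ⊕ ν)} {x : ℕ}
    {u : List ℕ} {y : ℕ} (h : TraverseRel G a k l g x u y) :
    ∃ f, TraversalEdge G val a k g u x f := by
  induction h with
  | base he hlab hk => exact ⟨_, .base he hlab hk⟩
  | step hi hB hx hz _ ih =>
    obtain ⟨f, hf⟩ := ih
    exact ⟨_, .step hi hB hx hz hf⟩

variable {g : HRHypergraph (σ ⊕ ν)} {u : List ℕ} {x f : ℕ}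

lemma TraversalEdge.mem_expandVal (hval : G.ValFamily val) (h : TraversalEdge G val a k g u x f) :
    f ∈ (G.expandVal val g).E := by
  induction h with
  | base hf hlab =>
    exact (keepsEdge_foldl_expandStep _ hf (Or.inl (by rw [hlab]; rfl))).mem
  | step hi hB _ _ _ ih =>
    rw [expandVal_eq_expandUpTo]
    exact (expandUpTo_fresh hi hB (hval _ ▸ ih) (List.lt_length_of_getElem? hi)).1

lemma TraversalEdge.lab_att (hval : G.ValFamily val) (hext : ∀ B, (G.rhs B).ext.Nodup)
    (h : TraversalEdge G val a k g u x f) :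
    (G.expandVal val g).lab f = Sum.inl a ∧ ((G.expandVal val g).att f)[k]? = some x := by
  induction h with
  | @base g x f hf hlab hk =>
    have hkeep : KeepsEdge g (G.expandVal val g) f :=
      keepsEdge_foldl_expandStep _ hf (Or.inl (by rw [hlab]; rfl))
    exact ⟨hkeep.lab.trans hlab, hkeep.att ▸ hk⟩
  | @step g x i e B j z v f hi hB hx hz hrec ih =>
    rw [← hval B] at ih
    obtain ⟨_, hatt, hlab⟩ :=
      expandUpTo_fresh hi hB (hval B ▸ hrec.mem_expandVal hval) (List.lt_length_of_getElem? hi)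
    have hzB : (val B).ext[j]? = some z := by rwa [hval B, expandVal_ext]
    have hnd : (val B).ext.Nodup := by rw [hval B, expandVal_ext]; exact hext B
    rw [expandVal_eq_expandUpTo]
    refine ⟨hlab.trans ih.1, ?_⟩
    rw [hatt, List.getElem?_map, ih.2, Option.map_some,
      renameVN_eq_of_getElem? hnd hzB ((keepsEdge_expandUpTo_of_mem_drop
        (List.mem_drop_of_getElem? hi)).att ▸ hx)]

lemma TraversalEdge.freshE_le {i : ℕ} {v : List ℕ}
    (h : TraversalEdge G val a k g (i :: v) x f) : freshE (expandUpTo val g i) ≤ f := by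
  cases h
  exact Nat.le_add_right _ _

lemma TraversalEdge.mem_expandUpTo (hval : G.ValFamily val) (h : TraversalEdge G val a k g u x f)
    {i' : ℕ} (hu : ∀ i ∈ u.head?, i < i') : f ∈ (expandUpTo val g i').E := by
  cases h with
  | base hf hlab => exact (keepsEdge_expandUpTo hf (Or.inl (by rw [hlab]; rfl))).mem
  | step hi hB _ _ hrec =>
    exact (expandUpTo_fresh hi hB (hval _ ▸ hrec.mem_expandVal hval) (hu _ rfl)).1

lemma TraversalEdge.false_of_head_lt (hval : G.ValFamily val)
    (h : TraversalEdge G val a k g u x f) {i' : ℕ} {v' : List ℕ} {x' : ℕ}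
    (h' : TraversalEdge G val a k g (i' :: v') x' f) (hu : ∀ i ∈ u.head?, i < i') : False :=
  (lt_freshE (h.mem_expandUpTo hval hu)).not_ge h'.freshE_le

lemma TraversalEdge.address_eq (hval : G.ValFamily val) (h : TraversalEdge G val a k g u x f)
    {u' : List ℕ} {x' f' : ℕ} (h' : TraversalEdge G val a k g u' x' f') (hf : f = f') :
    u = u' := by
  induction h generalizing u' x' f' with
  | base hf₀ hlab hk =>
    subst hf
    rcases u' with _ | ⟨i', v'⟩
    · rfl
    · exact ((TraversalEdge.base hf₀ hlab hk).false_of_head_lt hval h' (by simp)).elim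
  | @step g x i e B j z v f₀ hi hB hx hz hrec ih =>
    have hstep := TraversalEdge.step (val := val) hi hB hx hz hrec
    rcases u' with _ | ⟨i', v'⟩
    · exact ((hf ▸ h').false_of_head_lt hval hstep (by simp)).elim
    rcases lt_trichotomy i i' with hlt | rfl | hgt
    · exact (hstep.false_of_head_lt hval (hf ▸ h') (by simpa)).elim
    · cases h' with
      | step hi' hB' _ _ hrec' =>
        obtain rfl := Option.some.inj (hi.symm.trans hi')
        obtain rfl := Sum.inr.inj (hB.symm.trans hB')
        rw [ih hrec' (by omega)]
    · exact ((hf ▸ h').false_of_head_lt hval hstep (by simpa)).elim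

end TraversalEdge

end HRG

section Statements

open HRHypergraph HRG

theorem stmt9_general {σ ν : Type} [LinearOrder ν] (G : HRG σ ν) (hWF : G.WF) (hSL : G.SL)
    (val : ν → HRHypergraph (σ ⊕ ν)) (hval : G.ValFamily val)
    (hUL : (G.expandVal val G.start).UniqueLabeled)
    (root : Option ν) (x : ℕ) (a : σ) (k l l' : ℕ)
    (u u' : List ℕ) (y y' : ℕ)
    (h1 : TraverseRel G a k l (G.graphOf root) x u y)
    (h2 : TraverseRel G a k l' (G.graphOf root) x u' y') :
    u = u' := by
  have hUL_root : (G.expandVal val (G.graphOf root)).UniqueLabeled := by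
    cases root with
    | none => exact hUL
    | some A =>
      obtain ⟨A₀, hA₀, hreach⟩ := hSL.2 A
      exact hval A ▸ uniqueLabeled_val_of_reflTransGen G hval hUL hA₀ hreach
  obtain ⟨f, hf⟩ := h1.exists_traversalEdge (val := val)
  obtain ⟨f', hf'⟩ := h2.exists_traversalEdge (val := val)
  obtain ⟨hlab, hatt⟩ := hf.lab_att hval hWF.rhs_ext_nodup
  obtain ⟨hlab', hatt'⟩ := hf'.lab_att hval hWF.rhs_ext_nodup
  exact hf.address_eq hval hf' <|
    hUL_root x _ k f (hf.mem_expandVal hval) f' (hf'.mem_expandVal hval) hlab hlab' hatt hatt'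

theorem stmt9 {σ ν : Type} [LinearOrder ν] (G : HRG σ ν) (hWF : G.WF) (hSL : G.SL)
    (val : ν → HRHypergraph (σ ⊕ ν)) (hval : G.ValFamily val)
    (hUL : (G.expandVal val G.start).UniqueLabeled)
    (root : Option ν) (x : ℕ) (a : σ) (k l l' : ℕ) (hll : l ≠ l')
    (u u' : List ℕ) (y y' : ℕ)
    (h1 : TraverseRel G a k l (G.graphOf root) x u y)
    (h2 : TraverseRel G a k l' (G.graphOf root) x u' y') :
    u = u' :=
  stmt9_general G hWF hSL val hval hUL root x a k l l' u u' y y' h1 h2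

end Statements
end

section
/- Let G be an SL HR grammar with start graph S of rank 0. For every node u of dt(S) and every external vertex x of g_u there exist a unique proper ancestor v of u in dt(S) and a unique internal vertex y of g_v such that x is identified with y (through the chain of external-vertex identifications) in the derivation of val(G); that is, the mapping internal(u,x) is totally defined on dt(S) and always yields an ancestor of u. -/
/-! Formalization of SL HR grammars (straight-line hyperedge replacement grammars),
their derivation trees, traversal, and tableaux data structures. -/

universe u v

/-! The vertex `x` of `g_{u.i}` is the `j`-th external vertex of `rhs B`, so it is identified
with the `j`-th attached vertex of the `i`-th nonterminal edge of `g_u`; if that vertex is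
external in `g_u` we continue one level up. The walk ends at an internal vertex of a proper
ancestor, at the latest at the root, whose start graph has no external vertices. It is
deterministic because external sequences are repetition-free, so `j` is determined by `x`. -/

namespace HRG

variable {σ ν : Type} [LinearOrder ν] {G : HRG σ ν}

theorem mem_E_of_mem_ntEdgeList {g : HRHypergraph (σ ⊕ ν)} {e : ℕ}
    (h : e ∈ ntEdgeList g) : e ∈ g.E := by
  rw [ntEdgeList, List.mem_mergeSort, Finset.mem_sort] at h
  exact (Finset.mem_filter.mp h).1

theorem graphAt_cons_eq_some {g h : HRHypergraph (σ ⊕ ν)} {i : ℕ} {u : List ℕ} :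
    graphAt G g (i :: u) = some h ↔
      ∃ e B, (ntEdgeList g)[i]? = some e ∧ g.lab e = Sum.inr B ∧
        graphAt G (G.rhs B) u = some h := by
  simp only [graphAt]
  split
  · split <;> simp_all
  · simp_all

theorem graphAt_append (g : HRHypergraph (σ ⊕ ν)) (u w : List ℕ) :
    graphAt G g (u ++ w) = (graphAt G g u).bind (graphAt G · w) := by
  induction u generalizing g with
  | nil => rfl
  | cons i u ih =>
    simp only [List.cons_append, graphAt]
    split
    · split
      · exact ih _
      · rfl
    · rfl

theorem graphAt_append_singleton_eq_some {g₀ gc : HRHypergraph (σ ⊕ ν)} {u : List ℕ}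
    {i : ℕ} :
    graphAt G g₀ (u ++ [i]) = some gc ↔
      ∃ g, graphAt G g₀ u = some g ∧ ∃ e B, (ntEdgeList g)[i]? = some e ∧
        g.lab e = Sum.inr B ∧ gc = G.rhs B := by
  rw [graphAt_append, Option.bind_eq_some_iff]
  simp only [graphAt_cons_eq_some]
  simp [graphAt, eq_comm]

theorem graphAt_wf (hWF : G.WF) {g₀ : HRHypergraph (σ ⊕ ν)} (h₀ : g₀.WF G.rankL) :
    ∀ {u : List ℕ} {g : HRHypergraph (σ ⊕ ν)}, graphAt G g₀ u = some g → g.WF G.rankL := by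
  intro u
  induction u generalizing g₀ with
  | nil =>
    rintro g ⟨⟩
    exact h₀
  | cons i u ih =>
    intro g hg
    obtain ⟨e, B, -, -, hg⟩ := graphAt_cons_eq_some.mp hg
    exact ih (hWF.2.2.1 B) hg

namespace InternalRel

variable {g₀ : HRHypergraph (σ ⊕ ν)} {u v : List ℕ} {x y : ℕ}

theorem isPrefix (h : InternalRel G g₀ u x v y) : v <+: u := by
  induction h with
  | refl => exact List.prefix_refl _
  | up _ _ _ _ _ _ ih => exact ih.trans (List.prefix_append _ _)

theorem exists_graphAt_internal (h : InternalRel G g₀ u x v y) :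
    ∃ gv, graphAt G g₀ v = some gv ∧ y ∈ gv.V ∧ y ∉ gv.ext := by
  induction h with
  | refl hg hx hint => exact ⟨_, hg, hx, hint⟩
  | up _ _ _ _ _ _ ih => exact ih

theorem ne_of_mem_ext (h : InternalRel G g₀ u x v y) {g : HRHypergraph (σ ⊕ ν)}
    (hg : graphAt G g₀ u = some g) (hx : x ∈ g.ext) : v ≠ u := by
  cases h with
  | refl hg' _ hint =>
    rw [hg] at hg'
    cases hg'
    exact absurd hx hint
  | up _ _ _ _ _ hrec =>
    rintro rfl
    simpa using hrec.isPrefix.length_le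

theorem unique (hWF : G.WF) (h : InternalRel G g₀ u x v y) {v' : List ℕ} {y' : ℕ}
    (h' : InternalRel G g₀ u x v' y') : v = v' ∧ y = y' := by
  induction h generalizing v' y' with
  | refl hg _ hint =>
    cases h' with
    | refl => exact ⟨rfl, rfl⟩
    | up _ _ hgc hx' =>
      rw [hg] at hgc
      cases hgc
      exact absurd (List.mem_of_getElem? hx') hint
  | @up u i x j g gc e z _ _ hg he hgc hx hz _ ih =>
    generalize hw : u ++ [i] = w at h'
    cases h' with
    | refl hg' _ hint =>
      rw [← hw, hgc] at hg'
      cases hg'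
      exact absurd (List.mem_of_getElem? hx) hint
    | @up _ _ _ j' _ _ _ _ _ _ hg' he' hgc' hx' hz' hrec' =>
      obtain ⟨rfl, rfl⟩ := List.append_singleton_inj.mp hw
      rw [hg] at hg'; cases hg'
      rw [he] at he'; cases he'
      rw [hgc] at hgc'; cases hgc'
      obtain ⟨-, -, -, B, -, -, rfl⟩ := graphAt_append_singleton_eq_some.mp hgc
      obtain ⟨-, -, -, -, -, -, hext_nodup⟩ := hWF.2.2.1 B
      have hj : j = j' := (List.getElem?_inj (List.getElem?_eq_some_iff.mp hx).1
        hext_nodup).mp (hx.trans hx'.symm)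
      subst hj
      rw [hz] at hz'; cases hz'
      exact ih hrec'

end InternalRel

theorem exists_internalRel (hWF : G.WF) {g₀ : HRHypergraph (σ ⊕ ν)} (h₀ : g₀.WF G.rankL)
    (h₀ext : g₀.ext = []) :
    ∀ {u : List ℕ} {g : HRHypergraph (σ ⊕ ν)}, graphAt G g₀ u = some g →
      ∀ {x : ℕ}, x ∈ g.V → ∃ v y, InternalRel G g₀ u x v y := by
  intro u
  induction u using List.reverseRecOn with
  | nil =>
    rintro g ⟨⟩ x hx
    exact ⟨[], x, .refl rfl hx (by simp [h₀ext])⟩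
  | append_singleton u i ih =>
    intro gc hgc x hx
    by_cases hext : x ∈ gc.ext
    · obtain ⟨g, hg, e, B, he, hB, rfl⟩ := graphAt_append_singleton_eq_some.mp hgc
      obtain ⟨j, hj⟩ := List.mem_iff_getElem?.mp hext
      have hgWF := graphAt_wf hWF h₀ hg
      have heE : e ∈ g.E := mem_E_of_mem_ntEdgeList (List.mem_of_getElem? he)
      have hlen : (g.att e).length = (G.rhs B).ext.length := by
        rw [hgWF.2.2.2.1 e heE, hB, hWF.2.2.2.1 B]
        rfl
      have hjlt : j < (g.att e).length := hlen ▸ (List.getElem?_eq_some_iff.mp hj).1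
      have hy := List.getElem?_eq_getElem hjlt
      obtain ⟨v, z, hrel⟩ := ih hg (hgWF.2.1 e heE _ (List.mem_of_getElem? hy))
      exact ⟨v, z, .up hg he hgc hj hy hrel⟩
    · exact ⟨_, x, .refl hgc hx hext⟩

end HRG

section Statements

open HRHypergraph HRG

theorem stmt10_general {σ ν : Type} [LinearOrder ν] (G : HRG σ ν) (hWF : G.WF)
    (u : List ℕ) (g : HRHypergraph (σ ⊕ ν)) (hg : graphAt G G.start u = some g)
    (x : ℕ) (hx : x ∈ g.ext) :
    (∃! p : List ℕ × ℕ, InternalRel G G.start u x p.1 p.2) ∧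
    ∀ v y, InternalRel G G.start u x v y →
      v <+: u ∧ v ≠ u ∧
      ∃ gv, graphAt G G.start v = some gv ∧ y ∈ gv.V ∧ y ∉ gv.ext := by
  have hstart : G.start.WF G.rankL := hWF.2.2.2.2.1
  have hxV : x ∈ g.V := (graphAt_wf hWF hstart hg).2.2.2.2.2.1 x hx
  obtain ⟨v, y, hrel⟩ := exists_internalRel hWF hstart hWF.2.2.2.2.2 hg hxV
  refine ⟨⟨(v, y), hrel, fun p hp => ?_⟩, fun v' y' h' => ?_⟩
  · obtain ⟨hv, hy⟩ := hp.unique hWF hrel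
    exact Prod.ext hv hy
  · exact ⟨h'.isPrefix, h'.ne_of_mem_ext hg hx, h'.exists_graphAt_internal⟩

theorem stmt10 {σ ν : Type} [LinearOrder ν] (G : HRG σ ν) (hWF : G.WF) (hSL : G.SL)
    (u : List ℕ) (g : HRHypergraph (σ ⊕ ν)) (hg : graphAt G G.start u = some g)
    (x : ℕ) (hx : x ∈ g.ext) :
    (∃! p : List ℕ × ℕ, InternalRel G G.start u x p.1 p.2) ∧
    ∀ v y, InternalRel G G.start u x v y →
      v <+: u ∧ v ≠ u ∧
      ∃ gv, graphAt G G.start v = some gv ∧ y ∈ gv.V ∧ y ∉ gv.ext :=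
  stmt10_general G hWF u g hg x hx

end Statements
end
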